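/- For n ∈ ℕ, J_{1,n} ∈ {J_X, J_Y, J_D}^n (with J_D = [[1,-1],[1,1]]) and g = χ_{[-1/2,1/2)²} the indicator of the half-open unit square, the recursively defined functions satisfy B_{J_{l+1,n}} = χ_{[-1/2,1/2)²} for all l = 0,…,n; i.e. (Σ_{z ∈ ℤ²} χ_{[-1/2,1/2)²}(x + J^T z)) · χ_{[-1/2,1/2)²}(J^{-T} x) = χ_{[-1/2,1/2)²}(x) for each J ∈ {J_X, J_Y, J_D} and x ∈ ℝ². -/

import Mathlib

open Matrix

/-- The operator `Φ_J(f₁,f₂) = (Σ_{z ∈ ℤ^d} f₁(· + Jᵀz)) · f₂(J⁻ᵀ ·)`. -/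
noncomputable def Phi {d : ℕ} (J : Matrix (Fin d) (Fin d) ℤ)
    (f₁ f₂ : (Fin d → ℝ) → ℝ) : (Fin d → ℝ) → ℝ :=
  fun x => (∑' z : Fin d → ℤ, f₁ (x + fun i => ((Jᵀ.mulVec z) i : ℝ))) *
    f₂ (((J.map (Int.cast : ℤ → ℝ))ᵀ)⁻¹.mulVec x)

/-- The recursively defined functions `B_{J_{l,n}}` for the list `[J_l, …, J_n]`. -/
noncomputable def BofList {d : ℕ} (g : (Fin d → ℝ) → ℝ) :
    List (Matrix (Fin d) (Fin d) ℤ) → ((Fin d → ℝ) → ℝ)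
  | [] => g
  | Jl :: rest => Phi Jl g (BofList g rest)

/-- The indicator function of the half-open square `Q₂ = [-1/2,1/2)²`. -/
noncomputable def chiQ : (Fin 2 → ℝ) → ℝ :=
  fun x => if ∀ i, -(1 / 2) ≤ x i ∧ x i < 1 / 2 then 1 else 0

/-!
If `J⁻ᵀ` maps the half-open cube `Q` into itself, the translates `Q + Jᵀ ℤ^d` are pairwise
disjoint: `x, x + Jᵀz ∈ Q` give `J⁻ᵀx, J⁻ᵀx + z ∈ Q`, and two points of a half-open unit cube
differing by an integer vector coincide. So when `J⁻ᵀx ∈ Q` only `z = 0` contributes to the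
periodization and `Φ_J(χ_Q, χ_Q)(x) = χ_Q(x)`; when `J⁻ᵀx ∉ Q` also `x ∉ Q` and both sides
vanish. For `J_X`, `J_Y`, `J_D` the matrix `J⁻ᵀ` is `diag(1/2, 1)`, `diag(1, 1/2)` or
`½[[1, -1], [1, 1]]`, and each of these maps `Q₂` into itself.
-/

open Set

def halfOpenCube (ι : Type*) : Set (ι → ℝ) :=
  univ.pi fun _ => Ico (-(1 / 2)) (1 / 2)

lemma eq_zero_of_mem_halfOpenCube_of_add_intCast_mem {ι : Type*} {u : ι → ℝ} {z : ι → ℤ}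
    (hu : u ∈ halfOpenCube ι) (huz : u + (fun i => (z i : ℝ)) ∈ halfOpenCube ι) : z = 0 := by
  funext i
  obtain ⟨h₁, h₂⟩ := hu i (mem_univ i)
  obtain ⟨h₃, h₄⟩ := huz i (mem_univ i)
  simp only [Pi.add_apply] at h₃ h₄
  have : |(z i : ℝ)| < 1 := abs_lt.2 ⟨by linarith, by linarith⟩
  exact Int.abs_lt_one_iff.1 (by exact_mod_cast this)

section Periodization

variable {d : ℕ}

lemma tsum_indicator_halfOpenCube_add_mulVec {M B : Matrix (Fin d) (Fin d) ℝ} (hBM : B * M = 1)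
    (hB : MapsTo (B *ᵥ ·) (halfOpenCube (Fin d)) (halfOpenCube (Fin d))) {x : Fin d → ℝ}
    (hx : B *ᵥ x ∈ halfOpenCube (Fin d)) :
    ∑' z : Fin d → ℤ,
        (halfOpenCube (Fin d)).indicator (1 : (Fin d → ℝ) → ℝ) (x + M *ᵥ fun i => (z i : ℝ)) =
      (halfOpenCube (Fin d)).indicator 1 x := by
  rw [tsum_eq_single 0]
  · simp only [Pi.zero_apply, Int.cast_zero]
    rw [← Pi.zero_def, mulVec_zero, add_zero]
  intro z hz
  refine indicator_of_notMem (fun hmem => hz ?_) _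
  have hBz : B *ᵥ (x + M *ᵥ fun i => (z i : ℝ)) ∈ halfOpenCube (Fin d) := hB hmem
  rw [mulVec_add, mulVec_mulVec, hBM, one_mulVec] at hBz
  exact eq_zero_of_mem_halfOpenCube_of_add_intCast_mem hx hBz

theorem Phi_indicator_halfOpenCube {J : Matrix (Fin d) (Fin d) ℤ} {B : Matrix (Fin d) (Fin d) ℝ}
    (hBJ : B * (J.map (Int.cast : ℤ → ℝ))ᵀ = 1)
    (hB : MapsTo (B *ᵥ ·) (halfOpenCube (Fin d)) (halfOpenCube (Fin d))) :
    Phi J ((halfOpenCube (Fin d)).indicator 1) ((halfOpenCube (Fin d)).indicator 1) =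
      (halfOpenCube (Fin d)).indicator 1 := by
  funext x
  have hinv : ((J.map (Int.cast : ℤ → ℝ))ᵀ)⁻¹ = B := inv_eq_left_inv hBJ
  have hcast (z : Fin d → ℤ) : (fun i => ((Jᵀ *ᵥ z) i : ℝ)) =
      (J.map (Int.cast : ℤ → ℝ))ᵀ *ᵥ fun i => (z i : ℝ) := by
    funext i
    rw [← transpose_map]
    exact (Int.castRingHom ℝ).map_mulVec Jᵀ z i
  simp only [Phi, hinv, hcast]
  by_cases hx : B *ᵥ x ∈ halfOpenCube (Fin d)
  · rw [tsum_indicator_halfOpenCube_add_mulVec hBJ hB hx, indicator_of_mem hx, Pi.one_apply,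
      mul_one]
  · rw [indicator_of_notMem hx, mul_zero, indicator_of_notMem fun h => hx (hB h)]

end Periodization

lemma BofList_eq_of_forall_Phi_eq {d : ℕ} {g : (Fin d → ℝ) → ℝ}
    {L : List (Matrix (Fin d) (Fin d) ℤ)} (h : ∀ J ∈ L, Phi J g g = g) : BofList g L = g := by
  induction L with
  | nil => rfl
  | cons J L ih =>
    rw [BofList, ih fun A hA => h A (List.mem_cons_of_mem J hA)]
    exact h J List.mem_cons_self

lemma chiQ_eq_indicator : chiQ = (halfOpenCube (Fin 2)).indicator 1 := by
  funext x
  simp [chiQ, halfOpenCube, indicator]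

lemma Phi_chiQ_of_mem {J : Matrix (Fin 2) (Fin 2) ℤ}
    (hJ : J ∈ ({!![2, 0; 0, 1], !![1, 0; 0, 2], !![1, -1; 1, 1]} :
      Set (Matrix (Fin 2) (Fin 2) ℤ))) :
    Phi J chiQ chiQ = chiQ := by
  rw [chiQ_eq_indicator]
  rcases hJ with rfl | rfl | rfl <;>
    [apply Phi_indicator_halfOpenCube (B := !![1 / 2, 0; 0, 1]);
     apply Phi_indicator_halfOpenCube (B := !![1, 0; 0, 1 / 2]);
     apply Phi_indicator_halfOpenCube (B := !![1 / 2, -(1 / 2); 1 / 2, 1 / 2])]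
  all_goals first
    | ext i j
      fin_cases i <;> fin_cases j <;> norm_num [mul_apply]
    | intro y hy
      simp only [halfOpenCube, mem_univ_pi, Fin.forall_fin_two, mem_Ico, mulVec,
        dotProduct, Fin.sum_univ_two, of_apply, cons_val_zero,
        cons_val_one] at hy ⊢
      refine ⟨⟨?_, ?_⟩, ?_, ?_⟩ <;> linarith

/-- Lemma 4.4: for `J_{1,n} ∈ {J_X, J_Y, J_D}^n` and `g = χ_{[-1/2,1/2)²}`, the
recursively defined functions satisfy `B_{J_{l+1,n}} = χ_{[-1/2,1/2)²}`; pointwise,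
`(Σ_{z ∈ ℤ²} χ(x+Jᵀz)) · χ(J⁻ᵀx) = χ(x)` for each `J ∈ {J_X, J_Y, J_D}`. -/
theorem dirichlet_case_BofList_eq_indicator :
    (∀ J ∈ ({!![2, 0; 0, 1], !![1, 0; 0, 2], !![1, -1; 1, 1]} :
        Set (Matrix (Fin 2) (Fin 2) ℤ)),
      ∀ x : Fin 2 → ℝ,
        (∑' z : Fin 2 → ℤ, chiQ (x + fun i => ((Jᵀ.mulVec z) i : ℝ))) *
          chiQ (((J.map (Int.cast : ℤ → ℝ))ᵀ)⁻¹.mulVec x) = chiQ x) ∧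
    (∀ L : List (Matrix (Fin 2) (Fin 2) ℤ),
      (∀ A ∈ L, A ∈ ({!![2, 0; 0, 1], !![1, 0; 0, 2], !![1, -1; 1, 1]} :
        Set (Matrix (Fin 2) (Fin 2) ℤ))) →
      BofList chiQ L = chiQ) :=
  ⟨fun _ hJ x => congrFun (Phi_chiQ_of_mem hJ) x,
    fun _ hL => BofList_eq_of_forall_Phi_eq fun J hJ => Phi_chiQ_of_mem (hL J hJ)⟩
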